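/- For any δ ∈ (0,1), t > 0 and n ≥ 1, the iterated simplex integral ∫₀ᵗ dr_n ⋯ ∫₀^{r_2} dr_1 ∏_{i=0}^{n} (r_{i+1} - r_i)^{-δ}, with conventions r_0 = 0 and r_{n+1} = t, equals t^{n(1-δ) - δ} · Γ(1-δ)^{n+1} / Γ((n+1)(1-δ)). -/

import Mathlib

/-! The recursion `I_{n+1}(t) = ∫₀ᵗ (t - r)^{-δ} I_n(r) dr` is a convolution with the kernel
`r^{-δ}`, and the Beta integral `∫₀ᵗ r^{a-1} (t-r)^{b-1} dr = B(a, b) t^{a+b-1}` shows that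
convolving `r^{a-1}` with it multiplies by `Γ(1-δ) / Γ(a+1-δ)` and raises the exponent by `1 - δ`.
Starting from `I_0(t) = t^{-δ}`, the Gamma factors telescope. -/

open intervalIntegral Real

/-- Iterated simplex integral `∫₀ᵗ dr_n ⋯ ∫₀^{r₂} dr₁ ∏_{i=0}^n (r_{i+1}-r_i)^{-δ}`
with conventions `r₀ = 0`, `r_{n+1} = t`; the base case carries the factor `r₁^{-δ}`. -/
noncomputable def simplexIter' (δ : ℝ) : ℕ → ℝ → ℝ
  | 0, t => t ^ (-δ)
  | n + 1, t => ∫ r in (0:ℝ)..t, (t - r) ^ (-δ) * simplexIter' δ n r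

theorem integral_rpow_mul_sub_rpow {a b t : ℝ} (ha : 0 < a) (hb : 0 < b) (ht : 0 < t) :
    ∫ r in (0:ℝ)..t, r ^ (a - 1) * (t - r) ^ (b - 1) =
      Gamma a * Gamma b / Gamma (a + b) * t ^ (a + b - 1) := by
  apply Complex.ofReal_injective
  have hbeta := Complex.betaIntegral_scaled a b ht
  rw [Complex.betaIntegral_eq_Gamma_mul_div _ _ (by simpa) (by simpa)] at hbeta
  rw [← integral_ofReal, integral_congr (g := fun r : ℝ =>
    (r : ℂ) ^ ((a : ℂ) - 1) * ((t : ℂ) - r) ^ ((b : ℂ) - 1)), hbeta]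
  · push_cast [← Complex.Gamma_ofReal, Complex.ofReal_cpow ht.le]
    ring
  · intro r hr
    rw [Set.uIcc_of_le ht.le] at hr
    push_cast [Complex.ofReal_cpow hr.1, Complex.ofReal_cpow (sub_nonneg.2 hr.2)]
    rfl

theorem simplexIter'_eq {δ : ℝ} (hδ : δ < 1) (n : ℕ) {t : ℝ} (ht : 0 < t) :
    simplexIter' δ n t =
      Gamma (1 - δ) ^ (n + 1) / Gamma ((n + 1) * (1 - δ)) * t ^ ((n + 1) * (1 - δ) - 1) := by
  have hb : 0 < 1 - δ := sub_pos.2 hδ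
  induction n generalizing t with
  | zero =>
    simp [simplexIter', (Gamma_pos_of_pos hb).ne']
  | succ n ih =>
    set a : ℝ := (n + 1) * (1 - δ)
    have ha : 0 < a := by positivity
    calc simplexIter' δ (n + 1) t
        = ∫ r in (0:ℝ)..t, Gamma (1 - δ) ^ (n + 1) / Gamma a *
            (r ^ (a - 1) * (t - r) ^ ((1 - δ) - 1)) := by
          rw [simplexIter']
          refine integral_congr_ae (Filter.Eventually.of_forall fun r hr => ?_)
          rw [Set.uIoc_of_le ht.le] at hr
          rw [ih hr.1, sub_sub_cancel_left]
          ring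
      _ = Gamma (1 - δ) ^ (n + 1 + 1) / Gamma ((↑(n + 1) + 1) * (1 - δ)) *
            t ^ ((↑(n + 1) + 1) * (1 - δ) - 1) := by
          rw [integral_const_mul, integral_rpow_mul_sub_rpow ha hb ht]
          have hexp : a + (1 - δ) = (↑(n + 1) + 1) * (1 - δ) := by push_cast; ring
          rw [hexp]
          field_simp
          ring

theorem stmt1_general (δ t : ℝ) (hδ : δ ∈ Set.Ioo (0:ℝ) 1) (ht : 0 < t) (n : ℕ) :
    simplexIter' δ n t =
      t ^ ((n : ℝ) * (1 - δ) - δ) * (Real.Gamma (1 - δ)) ^ (n + 1) /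
        Real.Gamma (((n : ℝ) + 1) * (1 - δ)) := by
  rw [simplexIter'_eq hδ.2 n ht, show ((n : ℝ) + 1) * (1 - δ) - 1 = n * (1 - δ) - δ by ring]
  ring

theorem stmt1 (δ t : ℝ) (hδ : δ ∈ Set.Ioo (0:ℝ) 1) (ht : 0 < t) (n : ℕ) (hn : 1 ≤ n) :
    simplexIter' δ n t =
      t ^ ((n : ℝ) * (1 - δ) - δ) * (Real.Gamma (1 - δ)) ^ (n + 1) /
        Real.Gamma (((n : ℝ) + 1) * (1 - δ)) :=
  stmt1_general δ t hδ ht n
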